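/- Let H be a strongly t-saturating weighted graph with weight a_j at each vertex j, and let N be a nonempty subset of the vertex set of H. Then ν(H − N) ≥ t − Σ_{j ∈ N} a_j. -/

import Mathlib

open MvPolynomial
open scoped Classical

noncomputable section

/-! ### Weighted graphs and matchings -/

/-- Number of times the vertex `v` appears in the multiset of edges `M`. -/
def edgeCount {α : Type*} (M : Multiset (Sym2 α)) (v : α) : ℕ :=
  Multiset.countP (fun e => v ∈ e) M

/-- A matching of the weighted graph `(G, w)`: a family of edges of `G` (with repetitions
allowed) such that every vertex appears in these edges no more times than its weight.
Vertices of weight `0` are regarded as not belonging to the weighted graph. -/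
def IsWMatching {α : Type*} (G : SimpleGraph α) (w : α → ℕ) (M : Multiset (Sym2 α)) : Prop :=
  (∀ e ∈ M, e ∈ G.edgeSet) ∧ ∀ v, edgeCount M v ≤ w v

/-- The matching number of the weighted graph `(G, w)`. -/
def nu {α : Type*} (G : SimpleGraph α) (w : α → ℕ) : ℕ :=
  sSup {m | ∃ M : Multiset (Sym2 α), IsWMatching G w M ∧ Multiset.card M = m}

/-- `deg_w(i) = Σ_{j ∈ N_w(i)} w j`, the sum of the weights of the neighbours of `i`. -/
def wdeg {α : Type*} [Fintype α] (G : SimpleGraph α) (w : α → ℕ) (i : α) : ℕ :=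
  ∑ j : α, if G.Adj i j then w j else 0

/-- The weighted graph obtained from `(G, w)` by deleting the (open) neighbourhood of `i`. -/
def delNbr {α : Type*} (G : SimpleGraph α) (w : α → ℕ) (i : α) : α → ℕ :=
  fun j => if G.Adj i j then 0 else w j

/-- The weighted graph obtained from `(G, w)` by deleting the vertices of `N`. -/
def delSet {α : Type*} (w : α → ℕ) (N : Set α) : α → ℕ :=
  fun j => if j ∈ N then 0 else w j

/-- A weighted graph `H = (G, w)` is `t`-saturating if `ν(H) < t` and
`ν(H − N_H(i)) ≥ t − deg_H(i)` for every vertex `i` of `H`. -/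
def TSaturating {α : Type*} [Fintype α] (G : SimpleGraph α) (w : α → ℕ) (t : ℕ) : Prop :=
  nu G w < t ∧ ∀ i, 0 < w i → t ≤ nu G (delNbr G w i) + wdeg G w i

/-- A weighted graph `H = (G, w)` is strongly `t`-saturating if `ν(H) < t` and
`ν(H − j) ≥ t − w j` for every vertex `j` of `H`. -/
def StronglyTSaturating {α : Type*} (G : SimpleGraph α) (w : α → ℕ) (t : ℕ) : Prop :=
  nu G w < t ∧ ∀ j, 0 < w j → t ≤ nu G (delSet w {j}) + w j

/-! ### Covers, cores, neighbourhoods -/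

/-- A (vertex) cover of a graph. -/
def IsVCover {α : Type*} (G : SimpleGraph α) (F : Set α) : Prop :=
  ∀ ⦃i j⦄, G.Adj i j → i ∈ F ∨ j ∈ F

/-- A minimal (vertex) cover of a graph. -/
def IsMinimalVCover {α : Type*} (G : SimpleGraph α) (F : Set α) : Prop :=
  IsVCover G F ∧ ∀ F', IsVCover G F' → F' ⊆ F → F' = F

/-- `core(F)`: the set of vertices of `F` which are not adjacent to any vertex outside `F`. -/
def graphCore {α : Type*} (G : SimpleGraph α) (F : Set α) : Set α :=
  {i | i ∈ F ∧ ∀ j, G.Adj i j → j ∈ F}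

/-- The closed neighbourhood `N[U]` of a set of vertices `U`. -/
def closedNbhd {α : Type*} (G : SimpleGraph α) (U : Set α) : Set α :=
  U ∪ {v | ∃ u ∈ U, G.Adj u v}

/-- `F` is minimal among the covers of `G` containing `S`. -/
def MinimalCoverOver {α : Type*} (G : SimpleGraph α) (S F : Set α) : Prop :=
  IsVCover G F ∧ S ⊆ F ∧ ∀ F', IsVCover G F' → S ⊆ F' → F' ⊆ F → F' = F

/-- `W` is a dominating set: every vertex outside `W` is adjacent to a vertex of `W`. -/
def IsDominating {α : Type*} (G : SimpleGraph α) (W : Set α) : Prop :=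
  ∀ v, v ∉ W → ∃ u ∈ W, G.Adj u v

/-- Every connected component of `H` contains an odd cycle of length at most `L`. -/
def ComponentOddCycleLe {β : Type*} (H : SimpleGraph β) (L : ℕ) : Prop :=
  ∀ c : H.ConnectedComponent, ∃ (v : β) (cyc : H.Walk v v),
    H.connectedComponentMk v = c ∧ cyc.IsCycle ∧ Odd cyc.length ∧ cyc.length ≤ L

/-- Every connected component of `H` contains an odd cycle. -/
def ComponentOddCycle {β : Type*} (H : SimpleGraph β) : Prop :=
  ∀ c : H.ConnectedComponent, ∃ (v : β) (cyc : H.Walk v v),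
    H.connectedComponentMk v = c ∧ cyc.IsCycle ∧ Odd cyc.length

/-! ### Edge ideals -/

/-- The edge ideal of a simple graph. -/
def edgeIdeal (k : Type*) [CommRing k] {σ : Type*} (G : SimpleGraph σ) :
    Ideal (MvPolynomial σ k) :=
  Ideal.span {p | ∃ i j, G.Adj i j ∧ p = X i * X j}

/-- The maximal homogeneous ideal `(x_1, …, x_n)`. -/
def maxIdeal (k : Type*) [CommRing k] (σ : Type*) : Ideal (MvPolynomial σ k) :=
  Ideal.span (Set.range (X : σ → MvPolynomial σ k))

/-- `P_F`, the ideal generated by the variables `x_i`, `i ∈ F`. -/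
def varIdeal (k : Type*) [CommRing k] {σ : Type*} (F : Set σ) : Ideal (MvPolynomial σ k) :=
  Ideal.span ((fun i => (X i : MvPolynomial σ k)) '' F)

/-- The monomial `x^a`. -/
def monom (k : Type*) [CommRing k] {n : ℕ} (a : Fin n → ℕ) : MvPolynomial (Fin n) k :=
  ∏ i : Fin n, (X i : MvPolynomial (Fin n) k) ^ a i

/-- `f` belongs to the saturation `J̃ = ⋃_{m ≥ 1} (J : 𝔪^m)` of `J`. -/
def inSaturation (k : Type*) [CommRing k] {σ : Type*} (J : Ideal (MvPolynomial σ k))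
    (f : MvPolynomial σ k) : Prop :=
  ∃ m : ℕ, f ∈ Submodule.colon J (((maxIdeal k σ) ^ m : Ideal (MvPolynomial σ k)) : Set (MvPolynomial σ k))

/-- `P` is an associated prime of the ideal `J`, i.e. of the module `R ⧸ J`. -/
def assocPrime {R : Type*} [CommRing R] (J P : Ideal R) : Prop :=
  P ∈ associatedPrimes R (R ⧸ J)

/-- `P` is an embedded associated prime of `J`: an associated prime of `R ⧸ J` which is
not a minimal prime of `J`. -/
def embeddedAssocPrime {R : Type*} [CommRing R] (J P : Ideal R) : Prop :=
  assocPrime J P ∧ P ∉ J.minimalPrimes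

/-- The five configurations appearing in the description of `Ass(I³)`: a triangle; a union
of an edge and a triangle meeting at exactly one vertex; a union of two vertex-disjoint
triangles with no edges between them; a union of two triangles meeting at exactly one
vertex; a pentagon. `W` is the vertex set of the subgraph. -/
def Config3 {α : Type*} (G : SimpleGraph α) (W : Set α) : Prop :=
  (∃ u v w : α, u ≠ v ∧ u ≠ w ∧ v ≠ w ∧ G.Adj u v ∧ G.Adj v w ∧ G.Adj u w ∧
    W = {u, v, w}) ∨
  (∃ i j h v : α, [i, j, h, v].Pairwise (· ≠ ·) ∧ G.Adj i j ∧ G.Adj j h ∧ G.Adj i h ∧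
    G.Adj i v ∧ W = {i, j, h, v}) ∨
  (∃ u₁ v₁ w₁ u₂ v₂ w₂ : α, [u₁, v₁, w₁, u₂, v₂, w₂].Pairwise (· ≠ ·) ∧
    G.Adj u₁ v₁ ∧ G.Adj v₁ w₁ ∧ G.Adj u₁ w₁ ∧ G.Adj u₂ v₂ ∧ G.Adj v₂ w₂ ∧ G.Adj u₂ w₂ ∧
    (∀ x ∈ ({u₁, v₁, w₁} : Set α), ∀ y ∈ ({u₂, v₂, w₂} : Set α), ¬ G.Adj x y) ∧
    W = {u₁, v₁, w₁, u₂, v₂, w₂}) ∨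
  (∃ i j h u v : α, [i, j, h, u, v].Pairwise (· ≠ ·) ∧
    G.Adj i j ∧ G.Adj j h ∧ G.Adj i h ∧ G.Adj i u ∧ G.Adj u v ∧ G.Adj i v ∧
    W = {i, j, h, u, v}) ∨
  (∃ p : Fin 5 → α, Function.Injective p ∧ (∀ i : Fin 5, G.Adj (p i) (p (i + 1))) ∧
    W = Set.range p)

end

section Matching

variable {α : Type*}

lemma card_le_sum_edgeCount {M : Multiset (Sym2 α)} {N : Finset α}
    (hM : ∀ e ∈ M, ∃ j ∈ N, j ∈ e) :
    Multiset.card M ≤ ∑ j ∈ N, edgeCount M j := by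
  induction M using Multiset.induction_on with
  | empty => simp
  | cons e M ih =>
    obtain ⟨j, hjN, hje⟩ := hM e (Multiset.mem_cons_self e M)
    have he : 1 ≤ ∑ i ∈ N, if i ∈ e then 1 else 0 := by
      rw [Finset.sum_boole, Nat.cast_id, Nat.one_le_iff_ne_zero, Finset.card_ne_zero]
      exact ⟨j, Finset.mem_filter.mpr ⟨hjN, hje⟩⟩
    have hM' := ih fun e' he' => hM e' (Multiset.mem_cons_of_mem he')
    simp only [edgeCount, Multiset.countP_cons, Multiset.card_cons,
      Finset.sum_add_distrib] at hM' ⊢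
    omega

lemma delSet_delSet (w : α → ℕ) (A B : Set α) :
    delSet (delSet w A) B = delSet w (A ∪ B) := by
  funext v
  by_cases hA : v ∈ A <;> by_cases hB : v ∈ B <;> simp [delSet, hA, hB]

variable [Fintype α] (G : SimpleGraph α)

lemma bddAbove_matchingCards (w : α → ℕ) :
    BddAbove {m | ∃ M : Multiset (Sym2 α), IsWMatching G w M ∧ Multiset.card M = m} := by
  refine ⟨∑ v, w v, ?_⟩
  rintro _ ⟨M, ⟨-, hcount⟩, rfl⟩
  calc Multiset.card M ≤ ∑ v, edgeCount M v :=
        card_le_sum_edgeCount fun e _ => ⟨e.out.1, Finset.mem_univ _, e.out_fst_mem⟩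
    _ ≤ ∑ v, w v := Finset.sum_le_sum fun v _ => hcount v

variable {G}

lemma IsWMatching.card_le_nu {w : α → ℕ} {M : Multiset (Sym2 α)}
    (hM : IsWMatching G w M) : Multiset.card M ≤ nu G w :=
  le_csSup (bddAbove_matchingCards G w) ⟨M, hM, rfl⟩

variable (G)

lemma exists_isWMatching_card_eq_nu (w : α → ℕ) :
    ∃ M : Multiset (Sym2 α), IsWMatching G w M ∧ Multiset.card M = nu G w :=
  have hempty : IsWMatching G w 0 := ⟨by simp, by simp [edgeCount]⟩
  Nat.sSup_mem ⟨0, by exact ⟨0, hempty, rfl⟩⟩ (bddAbove_matchingCards G w)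

/-- A maximum matching loses at most `∑ j ∈ N, w j` edges when the edges meeting `N`
are discarded. -/
lemma nu_le_nu_delSet_add_sum (w : α → ℕ) (N : Finset α) :
    nu G w ≤ nu G (delSet w ↑N) + ∑ j ∈ N, w j := by
  obtain ⟨M, ⟨hedge, hcount⟩, hcard⟩ := exists_isWMatching_card_eq_nu G w
  set avoid : Sym2 α → Prop := fun e => ∀ j ∈ N, j ∉ e
  have hsplit : Multiset.card M =
      Multiset.card (M.filter avoid) + Multiset.card (M.filter (¬ avoid ·)) := by
    rw [← Multiset.card_add, Multiset.filter_add_not]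
  have hkept : IsWMatching G (delSet w ↑N) (M.filter avoid) := by
    refine ⟨fun e he => hedge e (Multiset.mem_of_mem_filter he), fun v => ?_⟩
    by_cases hv : v ∈ N
    · have : edgeCount (M.filter avoid) v = 0 :=
        Multiset.countP_eq_zero.mpr fun e he => (Multiset.mem_filter.mp he).2 v hv
      simp [delSet, hv, this]
    · simp only [delSet, Finset.mem_coe, hv, if_false]
      exact (Multiset.countP_le_of_le _ (Multiset.filter_le avoid M)).trans (hcount v)
  have hdropped : Multiset.card (M.filter (¬ avoid ·)) ≤ ∑ j ∈ N, w j := by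
    calc Multiset.card (M.filter (¬ avoid ·))
        ≤ ∑ j ∈ N, edgeCount (M.filter (¬ avoid ·)) j := by
          refine card_le_sum_edgeCount fun e he => ?_
          simpa [avoid] using (Multiset.mem_filter.mp he).2
      _ ≤ ∑ j ∈ N, w j := Finset.sum_le_sum fun j _ =>
          (Multiset.countP_le_of_le _ (Multiset.filter_le _ M)).trans (hcount j)
  have hkept_le := hkept.card_le_nu
  omega

end Matching

theorem stmt9 {α : Type*} [Fintype α] (G : SimpleGraph α) (w : α → ℕ) (t : ℕ)
    (hw : ∀ i, 0 < w i) (hsat : StronglyTSaturating G w t)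
    (N : Finset α) (hN : N.Nonempty) :
    t ≤ nu G (delSet w ↑N) + ∑ j ∈ N, w j := by
  obtain ⟨j, hj⟩ := hN
  have hrest : delSet (delSet w {j}) ↑(N.erase j) = delSet w ↑N := by
    rw [delSet_delSet, Set.singleton_union, ← Finset.coe_insert, Finset.insert_erase hj]
  have hsum : ∑ i ∈ N.erase j, delSet w {j} i = ∑ i ∈ N.erase j, w i :=
    Finset.sum_congr rfl fun i hi => by simp [delSet, Finset.ne_of_mem_erase hi]
  calc t ≤ nu G (delSet w {j}) + w j := hsat.2 j (hw j)
    _ ≤ nu G (delSet w ↑N) + ∑ i ∈ N.erase j, w i + w j := by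
      gcongr
      simpa only [hrest, hsum] using nu_le_nu_delSet_add_sum G (delSet w {j}) (N.erase j)
    _ = nu G (delSet w ↑N) + ∑ i ∈ N, w i := by rw [add_assoc, Finset.sum_erase_add _ _ hj]
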